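/- Let Φ and Θ be finite-dimensional real inner product spaces. Let f : Φ × Θ → ℝ and g : Θ → ℝ be differentiable, suppose g attains its infimum g* = inf_θ g(θ), suppose g satisfies the PL inequality with constant μ > 0 (‖∇g(θ)‖² ≥ (1/μ)(g(θ) - g*) for all θ), and suppose for every φ the map θ ↦ f(φ, θ) is L-Lipschitz (L > 0). Fix δ > 0 and a penalty constant γ ≥ L √(3 μ / δ), and set F_γ(φ, θ) = f(φ, θ) + γ g(θ). If (φ_γ, θ_γ) is a global minimizer of F_γ over Φ × Θ, then with ε_γ := g(θ_γ) - g* one has: (a) ε_γ ≤ δ, and (b) (φ_γ, θ_γ) is a global solution of the constrained problem min f(φ, θ) subject to g(θ) - g* ≤ ε_γ; that is, f(φ_γ, θ_γ) ≤ f(φ, θ) for every (φ, θ) with g(θ) - g* ≤ ε_γ. -/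

import Mathlib

/-!
At the minimizer, comparing `F_γ(φ_γ, θ_γ)` with `F_γ(φ_γ, θ)` and using that `f(φ_γ, ·)` is
`L`-Lipschitz gives `γ (g θ_γ - g θ) ≤ L ‖θ - θ_γ‖`, hence `γ ‖∇g(θ_γ)‖ ≤ L`. The PL inequality
then yields `ε_γ ≤ μ ‖∇g(θ_γ)‖² ≤ μ L² / γ² ≤ δ / 3`. Global optimality on the constraint set is
immediate: any feasible `θ` has `γ g θ ≤ γ g θ_γ`, so it cannot beat `θ_γ` on `f`.
-/

open Asymptotics Filter Topology

/-- A one-sided version of `HasFDerivAt.le_of_lip'`: it suffices that `g` cannot drop faster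
than `C` away from `x`. -/
theorem HasFDerivAt.norm_le_of_sub_le {E : Type*} [NormedAddCommGroup E] [NormedSpace ℝ E]
    {g : E → ℝ} {g' : E →L[ℝ] ℝ} {x : E} (hg : HasFDerivAt g g' x) {C : ℝ} (hC : 0 ≤ C)
    (hdrop : ∀ᶠ y in 𝓝 x, g x - g y ≤ C * ‖y - x‖) : ‖g'‖ ≤ C := by
  refine le_of_forall_pos_le_add fun ε hε => ContinuousLinearMap.opNorm_le_of_nhds_zero
    (by positivity) ?_
  have hneg : ∀ᶠ y in 𝓝 0, -g' y ≤ (C + ε) * ‖y‖ := by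
    rw [← map_add_left_nhds_zero x, eventually_map] at hdrop
    filter_upwards [isLittleO_iff.1 (hasFDerivAt_iff_isLittleO_nhds_zero.1 hg) hε, hdrop]
      with y hrem hy
    rw [add_sub_cancel_left] at hy
    rw [Real.norm_eq_abs] at hrem
    linarith [le_abs_self (g (x + y) - g x - g' y)]
  -- the bound in direction `-y` is the missing other half of `|g' y| ≤ (C + ε) ‖y‖`
  filter_upwards [hneg, (continuous_neg.tendsto' 0 0 neg_zero).eventually hneg]
    with y hy hy'
  rw [map_neg, neg_neg, norm_neg] at hy'
  exact abs_le.2 ⟨by linarith, hy'⟩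

theorem norm_gradient_eq_norm_fderiv {E : Type*} [NormedAddCommGroup E] [InnerProductSpace ℝ E]
    [CompleteSpace E] (g : E → ℝ) (x : E) : ‖gradient g x‖ = ‖fderiv ℝ g x‖ :=
  LinearIsometryEquiv.norm_map _ _

theorem mul_norm_gradient_le_of_isMinOn_add_mul {E : Type*} [NormedAddCommGroup E]
    [InnerProductSpace ℝ E] [CompleteSpace E] {h g : E → ℝ} {x : E} {L γ : ℝ}
    (hg : DifferentiableAt ℝ g x) (hL : 0 ≤ L) (hγ : 0 ≤ γ)
    (hLip : ∀ y, h y - h x ≤ L * ‖y - x‖)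
    (hmin : IsMinOn (fun y => h y + γ * g y) Set.univ x) :
    γ * ‖gradient g x‖ ≤ L := by
  have hdrop : ∀ y, γ * g x - γ * g y ≤ L * ‖y - x‖ := fun y => by
    linarith [isMinOn_univ_iff.1 hmin y, hLip y]
  have hnorm := (hg.hasFDerivAt.const_mul γ).norm_le_of_sub_le hL (Eventually.of_forall hdrop)
  rwa [norm_smul, Real.norm_of_nonneg hγ, ← norm_gradient_eq_norm_fderiv] at hnorm

theorem le_of_le_mul_sq_of_mul_le {ε μ n L γ δ : ℝ} (hγ : 0 < γ) (hn : 0 ≤ n)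
    (hε : ε ≤ μ * n ^ 2) (hγn : γ * n ≤ L) (hμ : 0 ≤ μ) (hγδ : μ * L ^ 2 ≤ δ * γ ^ 2) :
    ε ≤ δ := by
  have hsq : (γ * n) ^ 2 ≤ L ^ 2 := pow_le_pow_left₀ (by positivity) hγn 2
  refine le_of_mul_le_mul_right ?_ (pow_pos hγ 2)
  calc ε * γ ^ 2 ≤ μ * (γ * n) ^ 2 := by nlinarith [sq_nonneg γ]
    _ ≤ μ * L ^ 2 := mul_le_mul_of_nonneg_left hsq hμ
    _ ≤ δ * γ ^ 2 := hγδ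

theorem mul_sq_le_of_mul_sqrt_le {μ L δ γ : ℝ} (hμ : 0 ≤ μ) (hδ : 0 < δ)
    (hγ : L * Real.sqrt (3 * μ / δ) ≤ γ) (hL : 0 ≤ L) : μ * L ^ 2 ≤ δ * γ ^ 2 := by
  have hsq : L ^ 2 * (3 * μ / δ) ≤ γ ^ 2 := by
    calc L ^ 2 * (3 * μ / δ) = (L * Real.sqrt (3 * μ / δ)) ^ 2 := by
          rw [mul_pow, Real.sq_sqrt (by positivity)]
      _ ≤ γ ^ 2 := pow_le_pow_left₀ (by positivity) hγ 2
  have h3 : 3 * μ * L ^ 2 ≤ δ * γ ^ 2 := by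
    calc 3 * μ * L ^ 2 = δ * (L ^ 2 * (3 * μ / δ)) := by field_simp
      _ ≤ δ * γ ^ 2 := mul_le_mul_of_nonneg_left hsq hδ.le
  nlinarith [sq_nonneg L]

theorem penalized_global_min_solves_approx_bilevel_general
    {Φ Θ : Type*} [NormedAddCommGroup Φ] [InnerProductSpace ℝ Φ]
    [NormedAddCommGroup Θ] [InnerProductSpace ℝ Θ] [FiniteDimensional ℝ Θ]
    (f : Φ × Θ → ℝ) (g : Θ → ℝ)
    (hg : Differentiable ℝ g)
    (gstar : ℝ)
    (μ : ℝ) (hμ : 0 < μ)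
    (hPL : ∀ θ : Θ, ‖gradient g θ‖ ^ 2 ≥ (1 / μ) * (g θ - gstar))
    (L : ℝ) (hL : 0 < L)
    (hfLip : ∀ (φ : Φ) (θ₁ θ₂ : Θ), |f (φ, θ₁) - f (φ, θ₂)| ≤ L * ‖θ₁ - θ₂‖)
    (δ : ℝ) (hδ : 0 < δ)
    (γ : ℝ) (hγ : γ ≥ L * Real.sqrt (3 * μ / δ))
    (Fγ : Φ × Θ → ℝ) (hFγ : ∀ p : Φ × Θ, Fγ p = f p + γ * g p.2)
    (φγ : Φ) (θγ : Θ) (hmin : ∀ p : Φ × Θ, Fγ (φγ, θγ) ≤ Fγ p) :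
    g θγ - gstar ≤ δ ∧
      ∀ (φ : Φ) (θ : Θ), g θ - gstar ≤ g θγ - gstar → f (φγ, θγ) ≤ f (φ, θ) := by
  have hγpos : 0 < γ := lt_of_lt_of_le (by positivity) hγ
  have hmin' : ∀ φ θ, f (φγ, θγ) + γ * g θγ ≤ f (φ, θ) + γ * g θ := fun φ θ => by
    simpa only [hFγ] using hmin (φ, θ)
  refine ⟨?_, fun φ θ hθ => ?_⟩
  · have hstat : γ * ‖gradient g θγ‖ ≤ L :=
      mul_norm_gradient_le_of_isMinOn_add_mul (h := fun θ => f (φγ, θ)) (hg θγ) hL.le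
        hγpos.le (fun θ => (le_abs_self _).trans (hfLip φγ θ θγ))
        (isMinOn_univ_iff.2 (hmin' φγ))
    have hε : g θγ - gstar ≤ μ * ‖gradient g θγ‖ ^ 2 :=
      (inv_mul_le_iff₀ hμ).1 (by simpa only [one_div] using hPL θγ)
    exact le_of_le_mul_sq_of_mul_le hγpos (norm_nonneg _) hε hstat hμ.le
      (mul_sq_le_of_mul_sqrt_le hμ.le hδ hγ hL.le)
  · have hpen : γ * g θ ≤ γ * g θγ := mul_le_mul_of_nonneg_left (by linarith) hγpos.le
    linarith [hmin' φ θ]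

/-- **Lemma 1 (global-solution case, equivalence of the penalized formulation)**:
with `g` satisfying the PL inequality with constant `μ`, `f(φ, ·)` being `L`-Lipschitz,
and `γ ≥ L √(3μ/δ)`, any global minimizer `(φ_γ, θ_γ)` of the penalized objective
`F_γ = f + γ g` satisfies `ε_γ := g(θ_γ) - g* ≤ δ` and globally solves the constrained
problem `min f(φ,θ)  s.t.  g(θ) - g* ≤ ε_γ`. -/
theorem penalized_global_min_solves_approx_bilevel
    {Φ Θ : Type*} [NormedAddCommGroup Φ] [InnerProductSpace ℝ Φ] [FiniteDimensional ℝ Φ]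
    [NormedAddCommGroup Θ] [InnerProductSpace ℝ Θ] [FiniteDimensional ℝ Θ]
    (f : Φ × Θ → ℝ) (g : Θ → ℝ)
    (hf : Differentiable ℝ f) (hg : Differentiable ℝ g)
    (gstar : ℝ) (hglb : IsGLB (Set.range g) gstar) (hatt : ∃ θ₀ : Θ, g θ₀ = gstar)
    (μ : ℝ) (hμ : 0 < μ)
    (hPL : ∀ θ : Θ, ‖gradient g θ‖ ^ 2 ≥ (1 / μ) * (g θ - gstar))
    (L : ℝ) (hL : 0 < L)
    (hfLip : ∀ (φ : Φ) (θ₁ θ₂ : Θ), |f (φ, θ₁) - f (φ, θ₂)| ≤ L * ‖θ₁ - θ₂‖)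
    (δ : ℝ) (hδ : 0 < δ)
    (γ : ℝ) (hγ : γ ≥ L * Real.sqrt (3 * μ / δ))
    (Fγ : Φ × Θ → ℝ) (hFγ : ∀ p : Φ × Θ, Fγ p = f p + γ * g p.2)
    (φγ : Φ) (θγ : Θ) (hmin : ∀ p : Φ × Θ, Fγ (φγ, θγ) ≤ Fγ p) :
    g θγ - gstar ≤ δ ∧
      ∀ (φ : Φ) (θ : Θ), g θ - gstar ≤ g θγ - gstar → f (φγ, θγ) ≤ f (φ, θ) :=
  penalized_global_min_solves_approx_bilevel_general f g hg gstar μ hμ hPL L hL hfLip δ hδ γ hγ Fγ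
    hFγ φγ θγ hmin
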